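/- Let (C, 𝒞, μ) be a probability space, let A be a nonempty finite set, let K be a positive integer, and let β ≥ 0. For each k ∈ {1, …, K} let π_k : C × A → [0,1] be such that for every a the map c ↦ π_k(c, a) is measurable and for every c ∈ C, π_k(c, ·) is a probability vector on A. Define b_k(c, a) = min{1, (β/2) / (1 + Σ_{i=1}^{k-1} π_i(c, a))}. Then Σ_{k=1}^K ∫_C Σ_{a ∈ A} π_k(c, a) b_k(c, a) dμ(c) ≤ β |A| log(K + 1). -/

import Mathlib

open MeasureTheory

lemma bonus_step (p s β : ℝ) (hp0 : 0 ≤ p) (hp1 : p ≤ 1) (hs : 0 ≤ s) (hβ : 0 ≤ β) :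
    p * min 1 ((β / 2) / (1 + s)) ≤ β * (Real.log (1 + (s + p)) - Real.log (1 + s)) := by
  have h1 : (0:ℝ) < 1 + s := by linarith
  have h2 : (0:ℝ) < 1 + (s + p) := by linarith
  have hlog : Real.log ((1 + s) / (1 + (s + p))) ≤ (1 + s) / (1 + (s + p)) - 1 :=
    Real.log_le_sub_one_of_pos (by positivity)
  rw [Real.log_div h1.ne' h2.ne'] at hlog
  have hdiff : p / (1 + (s + p)) ≤ Real.log (1 + (s + p)) - Real.log (1 + s) := by
    have : (1 + s) / (1 + (s + p)) - 1 = -(p / (1 + (s + p))) := by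
      field_simp; ring
    linarith [hlog, this ▸ hlog]
  have hfrac : p / (2 * (1 + s)) ≤ p / (1 + (s + p)) := by
    apply div_le_div_of_nonneg_left hp0 h2
    linarith
  have hmin : p * min 1 ((β / 2) / (1 + s)) ≤ β * (p / (2 * (1 + s))) := by
    have : p * min 1 ((β / 2) / (1 + s)) ≤ p * ((β / 2) / (1 + s)) :=
      mul_le_mul_of_nonneg_left (min_le_right _ _) hp0
    calc p * min 1 ((β / 2) / (1 + s)) ≤ p * ((β / 2) / (1 + s)) := this
      _ = β * (p / (2 * (1 + s))) := by field_simp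
  calc p * min 1 ((β / 2) / (1 + s)) ≤ β * (p / (2 * (1 + s))) := hmin
    _ ≤ β * (p / (1 + (s + p))) := mul_le_mul_of_nonneg_left hfrac hβ
    _ ≤ β * (Real.log (1 + (s + p)) - Real.log (1 + s)) :=
        mul_le_mul_of_nonneg_left hdiff hβ

lemma bonus_key (K : ℕ) (β : ℝ) (hβ : 0 ≤ β) (p : ℕ → ℝ)
    (hp : ∀ k ∈ Finset.Icc 1 K, 0 ≤ p k ∧ p k ≤ 1) :
    ∑ k ∈ Finset.Icc 1 K, p k * min 1 ((β / 2) / (1 + ∑ i ∈ Finset.Icc 1 (k - 1), p i))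
      ≤ β * Real.log (K + 1) := by
  set S : ℕ → ℝ := fun m => ∑ i ∈ Finset.Icc 1 m, p i with hSdef
  have hS0 : ∀ m, m ≤ K → 0 ≤ S m := by
    intro m hm
    apply Finset.sum_nonneg
    intro i hi
    rcases Finset.mem_Icc.1 hi with ⟨h1, h2⟩
    exact (hp i (Finset.mem_Icc.2 ⟨h1, le_trans h2 hm⟩)).1
  have hSle : S K ≤ K := by
    calc S K ≤ ∑ i ∈ Finset.Icc 1 K, (1:ℝ) := Finset.sum_le_sum (fun i hi => (hp i hi).2)
      _ = K := by simp
  have hrw : ∑ k ∈ Finset.Icc 1 K, p k * min 1 ((β / 2) / (1 + S (k - 1)))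
      = ∑ i ∈ Finset.range K, p (i + 1) * min 1 ((β / 2) / (1 + S i)) := by
    rw [← Finset.Ico_add_one_right_eq_Icc, Finset.sum_Ico_eq_sum_range]
    simp [add_comm 1]
  have hmain : ∀ i ∈ Finset.range K,
      p (i + 1) * min 1 ((β / 2) / (1 + S i))
        ≤ β * (Real.log (1 + S (i + 1)) - Real.log (1 + S i)) := by
    intro i hi
    have hi' := Finset.mem_range.1 hi
    have hsucc : S (i + 1) = S i + p (i + 1) := by
      simpa using Finset.sum_Icc_succ_top (Nat.one_le_iff_ne_zero.2 (Nat.succ_ne_zero i)) p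
    rw [hsucc]
    exact bonus_step (p (i + 1)) (S i) β
      (hp (i + 1) (Finset.mem_Icc.2 ⟨Nat.one_le_iff_ne_zero.2 (Nat.succ_ne_zero i), hi'⟩)).1
      (hp (i + 1) (Finset.mem_Icc.2 ⟨Nat.one_le_iff_ne_zero.2 (Nat.succ_ne_zero i), hi'⟩)).2
      (hS0 i (le_of_lt hi')) hβ
  have hS00 : S 0 = 0 := by simp [hSdef]
  calc ∑ k ∈ Finset.Icc 1 K, p k * min 1 ((β / 2) / (1 + S (k - 1)))
      = ∑ i ∈ Finset.range K, p (i + 1) * min 1 ((β / 2) / (1 + S i)) := hrw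
    _ ≤ ∑ i ∈ Finset.range K, β * (Real.log (1 + S (i + 1)) - Real.log (1 + S i)) :=
        Finset.sum_le_sum hmain
    _ = β * ∑ i ∈ Finset.range K, (Real.log (1 + S (i + 1)) - Real.log (1 + S i)) := by
        rw [Finset.mul_sum]
    _ = β * (Real.log (1 + S K) - Real.log (1 + S 0)) := by
        rw [Finset.sum_range_sub (fun i => Real.log (1 + S i))]
    _ = β * Real.log (1 + S K) := by rw [hS00]; simp
    _ ≤ β * Real.log (K + 1) := by
        apply mul_le_mul_of_nonneg_left _ hβ
        apply Real.log_le_log (by linarith [hS0 K le_rfl])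
        linarith
  
/-- Expected bonuses bound over contexts: for contextual probability vectors
`π_k(c, ·)` on a nonempty finite set `A` and exploration bonuses
`b_k(c,a) = min{1, (β/2)/(1 + Σ_{i=1}^{k-1} π_i(c,a))}` with `β ≥ 0`,
`Σ_{k=1}^K ∫_C Σ_a π_k(c,a) b_k(c,a) dμ(c) ≤ β |A| log (K + 1)`. -/
theorem expected_bonuses_bound {C : Type*} [MeasurableSpace C] (μ : Measure C)
    [IsProbabilityMeasure μ]
    {A : Type*} [Fintype A] [Nonempty A] (K : ℕ) (hK : 0 < K)
    (β : ℝ) (hβ : 0 ≤ β)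
    (π : ℕ → C → A → ℝ)
    (hmeas : ∀ k ∈ Finset.Icc 1 K, ∀ a, Measurable (fun c => π k c a))
    (hπ01 : ∀ k ∈ Finset.Icc 1 K, ∀ c, ∀ a, 0 ≤ π k c a ∧ π k c a ≤ 1)
    (hπsum : ∀ k ∈ Finset.Icc 1 K, ∀ c, ∑ a, π k c a = 1) :
    ∑ k ∈ Finset.Icc 1 K, ∫ c, (∑ a, π k c a *
        min 1 ((β / 2) / (1 + ∑ i ∈ Finset.Icc 1 (k - 1), π i c a))) ∂μ
      ≤ β * (Fintype.card A) * Real.log (K + 1) := by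
  classical
  have hSnn : ∀ k ∈ Finset.Icc 1 K, ∀ c (a : A),
      0 ≤ ∑ i ∈ Finset.Icc 1 (k - 1), π i c a := by
    intro k hk c a
    apply Finset.sum_nonneg
    intro i hi
    rcases Finset.mem_Icc.1 hi with ⟨h1, h2⟩
    rcases Finset.mem_Icc.1 hk with ⟨hk1, hk2⟩
    exact (hπ01 i (Finset.mem_Icc.2 ⟨h1, by omega⟩) c a).1
  have htermnn : ∀ k ∈ Finset.Icc 1 K, ∀ c (a : A),
      0 ≤ π k c a * min 1 ((β / 2) / (1 + ∑ i ∈ Finset.Icc 1 (k - 1), π i c a)) := by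
    intro k hk c a
    apply mul_nonneg (hπ01 k hk c a).1
    apply le_min zero_le_one
    apply div_nonneg (by linarith)
    linarith [hSnn k hk c a]
  have htermle : ∀ k ∈ Finset.Icc 1 K, ∀ c (a : A),
      π k c a * min 1 ((β / 2) / (1 + ∑ i ∈ Finset.Icc 1 (k - 1), π i c a)) ≤ 1 := by
    intro k hk c a
    have h1 := (hπ01 k hk c a)
    have hm : min 1 ((β / 2) / (1 + ∑ i ∈ Finset.Icc 1 (k - 1), π i c a)) ≤ 1 :=
      min_le_left _ _
    have hmnn : 0 ≤ min 1 ((β / 2) / (1 + ∑ i ∈ Finset.Icc 1 (k - 1), π i c a)) := by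
      apply le_min zero_le_one
      apply div_nonneg (by linarith)
      linarith [hSnn k hk c a]
    calc π k c a * min 1 ((β / 2) / (1 + ∑ i ∈ Finset.Icc 1 (k - 1), π i c a))
        ≤ 1 * 1 := mul_le_mul h1.2 hm hmnn zero_le_one
      _ = 1 := one_mul 1
  have hint : ∀ k ∈ Finset.Icc 1 K, Integrable (fun c => ∑ a, π k c a *
      min 1 ((β / 2) / (1 + ∑ i ∈ Finset.Icc 1 (k - 1), π i c a))) μ := by
    intro k hk
    have hmeasf : Measurable (fun c => ∑ a, π k c a *
        min 1 ((β / 2) / (1 + ∑ i ∈ Finset.Icc 1 (k - 1), π i c a))) := by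
      apply Finset.measurable_sum
      intro a _
      apply Measurable.mul (hmeas k hk a)
      apply Measurable.min measurable_const
      apply Measurable.div measurable_const
      apply Measurable.add measurable_const
      apply Finset.measurable_sum
      intro i hi
      rcases Finset.mem_Icc.1 hi with ⟨h1, h2⟩
      rcases Finset.mem_Icc.1 hk with ⟨hk1, hk2⟩
      exact hmeas i (Finset.mem_Icc.2 ⟨h1, by omega⟩) a
    apply Integrable.mono' (integrable_const ((Fintype.card A : ℝ)))
      hmeasf.aestronglyMeasurable
    apply ae_of_all
    intro c
    rw [Real.norm_eq_abs, abs_of_nonneg (Finset.sum_nonneg fun a _ => htermnn k hk c a)]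
    calc (∑ a, π k c a * min 1 ((β / 2) / (1 + ∑ i ∈ Finset.Icc 1 (k - 1), π i c a)))
        ≤ ∑ _a : A, (1:ℝ) := Finset.sum_le_sum (fun a _ => htermle k hk c a)
      _ = Fintype.card A := by simp
  rw [← integral_finset_sum _ hint]
  have hbound : ∀ c, (∑ k ∈ Finset.Icc 1 K, ∑ a, π k c a *
      min 1 ((β / 2) / (1 + ∑ i ∈ Finset.Icc 1 (k - 1), π i c a)))
      ≤ β * (Fintype.card A) * Real.log (K + 1) := by
    intro c
    rw [Finset.sum_comm]
    calc (∑ a, ∑ k ∈ Finset.Icc 1 K, π k c a *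
        min 1 ((β / 2) / (1 + ∑ i ∈ Finset.Icc 1 (k - 1), π i c a)))
        ≤ ∑ _a : A, β * Real.log (K + 1) := by
          apply Finset.sum_le_sum
          intro a _
          exact bonus_key K β hβ (fun k => π k c a) (fun k hk => hπ01 k hk c a)
      _ = β * (Fintype.card A) * Real.log (K + 1) := by
          rw [Finset.sum_const]
          simp [Finset.card_univ]
          ring
  calc (∫ c, ∑ k ∈ Finset.Icc 1 K, ∑ a, π k c a *
      min 1 ((β / 2) / (1 + ∑ i ∈ Finset.Icc 1 (k - 1), π i c a)) ∂μ)
      ≤ ∫ _c, β * (Fintype.card A) * Real.log (K + 1) ∂μ :=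
        integral_mono (integrable_finset_sum _ hint) (integrable_const _) hbound
    _ = β * (Fintype.card A) * Real.log (K + 1) := by simp
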